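/- Let G be a finite simple graph whose IR-graph H is connected, and let X be an IR(G)-set such that either (i) the induced subgraph G[X] has exactly one edge, or (ii) X is independent but at least two vertices of X have X-external private neighbours. Then H contains an induced 4-cycle C_4. -/

import Mathlib

open SimpleGraph

section IRDefs

variable {V : Type*}

/-- `w` is a `D`-private neighbour of `v`: `w` is dominated by `v` but by no other
vertex of `D`. -/
def IsPrivateNbr (G : SimpleGraph V) (D : Set V) (v w : V) : Prop :=
  (w = v ∨ G.Adj v w) ∧ ∀ u ∈ D, u ≠ v → ¬(w = u ∨ G.Adj u w)

/-- The set `PN(v, D)` of `D`-private neighbours of `v`. -/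
def PN (G : SimpleGraph V) (v : V) (D : Set V) : Set V := {w | IsPrivateNbr G D v w}

/-- The set `EPN(v, D) = PN(v, D) − D` of external `D`-private neighbours of `v`. -/
def EPN (G : SimpleGraph V) (v : V) (D : Set V) : Set V := PN G v D \ D

/-- A set `D` is irredundant if every vertex of `D` has a `D`-private neighbour. -/
def Irredundant (G : SimpleGraph V) (D : Set V) : Prop := ∀ v ∈ D, (PN G v D).Nonempty

/-- The upper irredundance number `IR(G)`. -/
noncomputable def IRnum (G : SimpleGraph V) : ℕ :=
  sSup {n | ∃ D : Set V, Irredundant G D ∧ D.ncard = n}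

/-- An `IR(G)`-set: an irredundant set of maximum cardinality `IR(G)`. -/
def IsIRSet (G : SimpleGraph V) (D : Set V) : Prop :=
  Irredundant G D ∧ D.ncard = IRnum G

/-- The `IR`-graph of `G`: vertices are the `IR(G)`-sets, and `D` is adjacent to `D'`
iff `D' = (D − {u}) ∪ {v}` for some `u ∈ D` and `v ∈ D' − {u}` with `uv ∈ E(G)`. -/
def IRGraph (G : SimpleGraph V) [Fintype V] :
    SimpleGraph {D : Set V // IsIRSet G D} where
  Adj D D' := ∃ a b, a ∈ D.1 ∧ b ∈ D'.1 ∧ b ≠ a ∧ G.Adj a b ∧ D'.1 = (D.1 \ {a}) ∪ {b}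
  symm := by
    refine ⟨?_⟩
    rintro ⟨D, hD⟩ ⟨D', hD'⟩ ⟨a, b, ha, hb, hba, hadj, heq⟩
    dsimp only at ha hb heq ⊢
    have hbD : b ∉ D := by
      intro hbD
      have h1 : D' = D \ {a} := by
        rw [heq]
        ext x
        simp only [Set.mem_union, Set.mem_diff, Set.mem_singleton_iff]
        constructor
        · rintro (h | rfl)
          · exact h
          · exact ⟨hbD, hba⟩
        · exact Or.inl
      have h2 : D'.ncard = D.ncard - 1 := by
        rw [h1, Set.ncard_diff_singleton_of_mem ha]
      have h3 : D.ncard = D'.ncard := by rw [hD.2, hD'.2]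
      have h4 : 0 < D.ncard := (Set.ncard_pos (Set.toFinite D)).2 ⟨a, ha⟩
      omega
    refine ⟨b, a, hb, ha, fun h => hba h.symm, hadj.symm, ?_⟩
    rw [heq]
    ext x
    simp only [Set.mem_union, Set.mem_diff, Set.mem_singleton_iff]
    constructor
    · intro hx
      by_cases hxa : x = a
      · exact Or.inr hxa
      · have hxb : x ≠ b := fun h => hbD (h ▸ hx)
        exact Or.inl ⟨Or.inl ⟨hx, hxa⟩, hxb⟩
    · rintro (⟨(⟨hx, _⟩ | rfl), hxb⟩ | rfl)
      · exact hx
      · exact absurd rfl hxb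
      · exact ha
  loopless := by
    refine ⟨?_⟩
    rintro ⟨D, hD⟩ ⟨a, b, ha, hb, hba, hadj, heq⟩
    dsimp only at ha hb heq
    have h2 : a ∈ (D \ {a}) ∪ {b} := heq ▸ ha
    rcases h2 with h | h
    · exact h.2 rfl
    · exact hba h.symm

end IRDefs

/-! Let `x, y ∈ X` be the two vertices singled out by the hypothesis and `x', y'` external
`X`-private neighbours of them (in case (i) every private neighbour of `x` or `y` is external,
because `x` and `y` dominate each other). All edges of `G[X]` join `x` and `y`, so exchanging
`x` for `x'`, `y` for `y'`, or both, gives irredundant sets of size `IR(G)`: the vertices of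
`X - {x, y}` remain their own private neighbours, `x'` and `y'` are their own after a single
exchange, and after the double exchange (where `x'` and `y'` may be adjacent) `x` and `y` are
private neighbours of `x'` and `y'`. The sets `X`, `X - x + x'`, `X - x - y + x' + y'`,
`X - y + y'` form a 4-cycle in the `IR`-graph, induced because opposite sets differ in two
vertices. -/

section IRGraphFourCycle

variable {V : Type*} {G : SimpleGraph V}

section PrivateNeighbours

variable {D : Set V} {u v w : V}

lemma self_mem_PN (h : ∀ u ∈ D, ¬G.Adj u v) : v ∈ PN G v D :=
  ⟨Or.inl rfl, fun u hu huv hdom => hdom.elim (fun e => huv e.symm) (h u hu)⟩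

lemma mem_PN_of_adj (hw : w ∉ D) (hvw : G.Adj v w) (h : ∀ u ∈ D, G.Adj u w → u = v) :
    w ∈ PN G v D :=
  ⟨Or.inr hvw, fun u hu huv hdom => hdom.elim (fun e => hw (e ▸ hu)) (huv ∘ h u hu)⟩

lemma mem_EPN_of_mem_PN (hw : w ∈ PN G v D) (hu : u ∈ D) (huv : G.Adj u v) :
    w ∈ EPN G v D := by
  refine ⟨hw, fun hwD => ?_⟩
  by_cases hwv : w = v
  · subst hwv
    exact hw.2 u hu huv.ne (Or.inr huv)
  · exact hw.2 w hwD hwv (Or.inl rfl)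

lemma adj_of_mem_EPN (hv : v ∈ D) (hw : w ∈ EPN G v D) : G.Adj v w :=
  hw.1.1.resolve_left fun e => hw.2 (e ▸ hv)

lemma not_adj_of_mem_EPN (hw : w ∈ EPN G v D) (hu : u ∈ D) (huv : u ≠ v) : ¬G.Adj u w :=
  fun h => hw.1.2 u hu huv (Or.inr h)

lemma SimpleGraph.IsIndepSet.irredundant (hD : G.IsIndepSet D) : Irredundant G D :=
  fun v hv => ⟨v, self_mem_PN fun _ hu huv => hD hu hv huv.ne huv⟩

end PrivateNeighbours

section Exchange

def exchange (D : Set V) (a b : V) : Set V := (D \ {a}) ∪ {b}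

variable {D : Set V} {a b c d w : V}

lemma mem_exchange : w ∈ exchange D a b ↔ w = b ∨ w ∈ D ∧ w ≠ a := by
  simp only [exchange, Set.mem_union, Set.mem_sdiff, Set.mem_singleton_iff]
  tauto

lemma ncard_exchange (ha : a ∈ D) (hb : b ∉ D) : (exchange D a b).ncard = D.ncard := by
  rw [exchange, Set.union_singleton, Set.ncard_exchange hb ha]

lemma exchange_exchange_comm (hbc : b ≠ c) (hda : d ≠ a) :
    exchange (exchange D a b) c d = exchange (exchange D c d) a b := by
  ext w
  simp only [mem_exchange]
  grind

end Exchange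

lemma IsIRSet.exchange (hD : IsIRSet G D) (ha : a ∈ D) (hb : b ∉ D)
    (hirr : Irredundant G (exchange D a b)) : IsIRSet G (exchange D a b) :=
  ⟨hirr, (ncard_exchange ha hb).trans hD.2⟩

section IRGraphAdj

variable [Fintype V]

lemma IRGraph_adj_of_eq_exchange {D D' : {D : Set V // IsIRSet G D}} {a b : V}
    (ha : a ∈ D.1) (hab : G.Adj a b) (hD' : D'.1 = exchange D.1 a b) : (IRGraph G).Adj D D' :=
  ⟨a, b, ha, by rw [hD', mem_exchange]; exact Or.inl rfl, hab.ne', hab, hD'⟩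

lemma eq_of_IRGraph_adj {D D' : {D : Set V // IsIRSet G D}} (h : (IRGraph G).Adj D D')
    {u v : V} (hu : u ∈ D.1) (hv : v ∈ D.1) (hu' : u ∉ D'.1) (hv' : v ∉ D'.1) : u = v := by
  obtain ⟨a, b, -, -, -, -, hD'⟩ := h
  have hu_a : u = a := by_contra fun h => hu' (hD' ▸ Or.inl ⟨hu, h⟩)
  have hv_a : v = a := by_contra fun h => hv' (hD' ▸ Or.inl ⟨hv, h⟩)
  exact hu_a.trans hv_a.symm

end IRGraphAdj

lemma nonempty_cycleGraph_four_embedding {W : Type*} {H : SimpleGraph W} {a b c d : W}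
    (hab : H.Adj a b) (hbc : H.Adj b c) (hcd : H.Adj c d) (hda : H.Adj d a)
    (hac : a ≠ c) (hbd : b ≠ d) (hac' : ¬H.Adj a c) (hbd' : ¬H.Adj b d) :
    Nonempty (cycleGraph 4 ↪g H) := by
  refine ⟨⟨⟨![a, b, c, d], ?_⟩, ?_⟩⟩
  · intro i j h
    fin_cases i <;> fin_cases j <;>
      simp_all [hab.ne, hbc.ne, hcd.ne, hda.ne, hab.ne', hbc.ne', hcd.ne', hda.ne', hac.symm,
        hbd.symm]
  · have hac'' : ¬H.Adj c a := fun h => hac' h.symm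
    have hbd'' : ¬H.Adj d b := fun h => hbd' h.symm
    intro i j
    change H.Adj (![a, b, c, d] i) (![a, b, c, d] j) ↔ _
    fin_cases i <;> fin_cases j <;>
      simp [cycleGraph_adj, hab, hbc, hcd, hda, hab.symm, hbc.symm, hcd.symm, hda.symm, hac',
        hbd', hac'', hbd''] <;> decide

section Configuration

variable {X : Set V} {x y x' y' : V}

lemma isIndepSet_exchange (hx' : x' ∈ EPN G x X)
    (hedge : ∀ u ∈ X, ∀ v ∈ X, G.Adj u v → u = x ∨ v = x) :
    G.IsIndepSet (exchange X x x') := by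
  intro u hu v hv huv hadj
  rw [mem_exchange] at hu hv
  rcases hu with rfl | ⟨huX, hux⟩ <;> rcases hv with rfl | ⟨hvX, hvx⟩
  · exact huv rfl
  · exact not_adj_of_mem_EPN hx' hvX hvx hadj.symm
  · exact not_adj_of_mem_EPN hx' huX hux hadj
  · exact (hedge u huX v hvX hadj).elim hux hvx

lemma mem_PN_exchange_exchange (hx : x ∈ X) (hxy : x ≠ y) (hx' : x' ∈ EPN G x X)
    (hy' : y' ∈ EPN G y X) (hedge : ∀ u ∈ X, ∀ v ∈ X, G.Adj u v → u = x ∨ u = y) :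
    x ∈ PN G x' (exchange (exchange X x x') y y') := by
  refine mem_PN_of_adj ?_ (adj_of_mem_EPN hx hx').symm fun u hu hux => ?_
  · rw [mem_exchange, mem_exchange]
    rintro (h | ⟨h | ⟨-, h⟩, -⟩)
    · exact hy'.2 (h ▸ hx)
    · exact hx'.2 (h ▸ hx)
    · exact h rfl
  · simp only [mem_exchange] at hu
    rcases hu with rfl | ⟨rfl | ⟨huX, hux'⟩, huy⟩
    · exact (not_adj_of_mem_EPN hy' hx hxy hux.symm).elim
    · rfl
    · exact ((hedge u huX x hx hux).elim hux' huy).elim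

lemma irredundant_exchange_exchange (hx : x ∈ X) (hy : y ∈ X) (hxy : x ≠ y)
    (hx' : x' ∈ EPN G x X) (hy' : y' ∈ EPN G y X)
    (hedge : ∀ u ∈ X, ∀ v ∈ X, G.Adj u v → u = x ∨ u = y) :
    Irredundant G (exchange (exchange X x x') y y') := by
  have hx'y : x' ≠ y := fun h => hx'.2 (h ▸ hy)
  have hy'x : y' ≠ x := fun h => hy'.2 (h ▸ hx)
  intro w hw
  rw [mem_exchange, mem_exchange] at hw
  rcases hw with rfl | ⟨rfl | ⟨hwX, hwx⟩, hwy⟩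
  · rw [exchange_exchange_comm hx'y hy'x]
    exact ⟨y, mem_PN_exchange_exchange hy hxy.symm hy' hx'
      fun u hu v hv h => (hedge u hu v hv h).symm⟩
  · exact ⟨x, mem_PN_exchange_exchange hx hxy hx' hy' hedge⟩
  · refine ⟨w, self_mem_PN fun u hu hadj => ?_⟩
    rw [mem_exchange, mem_exchange] at hu
    rcases hu with rfl | ⟨rfl | ⟨huX, hux⟩, huy⟩
    · exact not_adj_of_mem_EPN hy' hwX hwy hadj.symm
    · exact not_adj_of_mem_EPN hx' hwX hwx hadj.symm
    · exact (hedge u huX w hwX hadj).elim hux huy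

lemma nonempty_cycleGraph_four_embedding_IRGraph [Fintype V] (hX : IsIRSet G X) (hx : x ∈ X)
    (hy : y ∈ X) (hxy : x ≠ y) (hx' : x' ∈ EPN G x X) (hy' : y' ∈ EPN G y X)
    (hedge : ∀ u ∈ X, ∀ v ∈ X, G.Adj u v → u = x ∧ v = y ∨ u = y ∧ v = x) :
    Nonempty (cycleGraph 4 ↪g IRGraph G) := by
  have hxx' : G.Adj x x' := adj_of_mem_EPN hx hx'
  have hyy' : G.Adj y y' := adj_of_mem_EPN hy hy'
  have hx'y : x' ≠ y := fun h => hx'.2 (h ▸ hy)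
  have hy'x : y' ≠ x := fun h => hy'.2 (h ▸ hx)
  have hx'y' : x' ≠ y' := fun h => not_adj_of_mem_EPN hx' hy hxy.symm (h ▸ hyy')
  have hyX1 : y ∈ exchange X x x' := mem_exchange.2 (Or.inr ⟨hy, hxy.symm⟩)
  have hy'X1 : y' ∉ exchange X x x' := by
    simp only [mem_exchange, hx'y'.symm, hy'.2, false_and, or_self, not_false_eq_true]
  let X0 : {D // IsIRSet G D} := ⟨X, hX⟩
  let X1 : {D // IsIRSet G D} := ⟨exchange X x x', hX.exchange hx hx'.2
    (isIndepSet_exchange hx' fun u hu v hv h =>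
      (hedge u hu v hv h).imp And.left And.right).irredundant⟩
  let X2 : {D // IsIRSet G D} := ⟨exchange X y y', hX.exchange hy hy'.2
    (isIndepSet_exchange hy' fun u hu v hv h =>
      (hedge u hu v hv h).symm.imp And.left And.right).irredundant⟩
  let X3 : {D // IsIRSet G D} := ⟨exchange (exchange X x x') y y', X1.2.exchange hyX1 hy'X1
    (irredundant_exchange_exchange hx hy hxy hx' hy'
      fun u hu v hv h => (hedge u hu v hv h).imp And.left And.left)⟩
  have hxX2 : x ∈ X2.1 := mem_exchange.2 (Or.inr ⟨hx, hxy⟩)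
  have hx'X1 : x' ∈ X1.1 := mem_exchange.2 (Or.inl rfl)
  have hx'X2 : x' ∉ X2.1 := by simp [X2, mem_exchange, hx'y', hx'.2]
  have hyX2 : y ∉ X2.1 := by simp [X2, mem_exchange, hyy'.ne]
  have hxX3 : x ∉ X3.1 := by simp [X3, mem_exchange, hy'x.symm, hxx'.ne, hxy]
  have hyX3 : y ∉ X3.1 := by simp [X3, mem_exchange, hyy'.ne]
  refine nonempty_cycleGraph_four_embedding (a := X0) (b := X1) (c := X3) (d := X2)
    (IRGraph_adj_of_eq_exchange hx hxx' rfl)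
    (IRGraph_adj_of_eq_exchange hyX1 hyy' rfl)
    (IRGraph_adj_of_eq_exchange hxX2 hxx' (exchange_exchange_comm hx'y hy'x)).symm
    (IRGraph_adj_of_eq_exchange hy hyy' rfl).symm
    (fun h => hxX3 (congrArg Subtype.val h ▸ hx))
    (fun h => hx'X2 (congrArg Subtype.val h ▸ hx'X1))
    (fun h => hxy (eq_of_IRGraph_adj h hx hy hxX3 hyX3))
    (fun h => hx'y (eq_of_IRGraph_adj h hx'X1 hyX1 hx'X2 hyX2))

end Configuration

end IRGraphFourCycle

theorem statement9_general {V : Type*} [Fintype V] (G : SimpleGraph V)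
    (X : Set V) (hX : IsIRSet G X)
    (hcase :
      (∃ x y, x ∈ X ∧ y ∈ X ∧ G.Adj x y ∧
        ∀ p ∈ X, ∀ q ∈ X, G.Adj p q → (p = x ∧ q = y) ∨ (p = y ∧ q = x)) ∨
      ((∀ p ∈ X, ∀ q ∈ X, ¬ G.Adj p q) ∧
        ∃ x y, x ∈ X ∧ y ∈ X ∧ x ≠ y ∧
          (EPN G x X).Nonempty ∧ (EPN G y X).Nonempty)) :
    Nonempty (SimpleGraph.cycleGraph 4 ↪g IRGraph G) := by
  rcases hcase with
    ⟨x, y, hx, hy, hxy, hedge⟩ | ⟨hind, x, y, hx, hy, hne, ⟨x', hx'⟩, ⟨y', hy'⟩⟩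
  · obtain ⟨x', hx'⟩ := hX.1 x hx
    obtain ⟨y', hy'⟩ := hX.1 y hy
    exact nonempty_cycleGraph_four_embedding_IRGraph hX hx hy hxy.ne
      (mem_EPN_of_mem_PN hx' hy hxy.symm) (mem_EPN_of_mem_PN hy' hx hxy) hedge
  · exact nonempty_cycleGraph_four_embedding_IRGraph hX hx hy hne hx' hy'
      fun u hu v hv h => (hind u hu v hv h).elim

/-- If the `IR`-graph of `G` is connected and `X` is an `IR(G)`-set such that
either `G[X]` has exactly one edge, or `X` is independent with at least two
vertices having `X`-external private neighbours, then the `IR`-graph contains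
an induced 4-cycle. -/
theorem statement9 {V : Type*} [Fintype V] (G : SimpleGraph V)
    (hconn : (IRGraph G).Connected) (X : Set V) (hX : IsIRSet G X)
    (hcase :
      (∃ x y, x ∈ X ∧ y ∈ X ∧ G.Adj x y ∧
        ∀ p ∈ X, ∀ q ∈ X, G.Adj p q → (p = x ∧ q = y) ∨ (p = y ∧ q = x)) ∨
      ((∀ p ∈ X, ∀ q ∈ X, ¬ G.Adj p q) ∧
        ∃ x y, x ∈ X ∧ y ∈ X ∧ x ≠ y ∧
          (EPN G x X).Nonempty ∧ (EPN G y X).Nonempty)) :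
    Nonempty (SimpleGraph.cycleGraph 4 ↪g IRGraph G) :=
  statement9_general G X hX hcase
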